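/- arXiv:1802.09372 — 2 statements merged into one kernel-verified Lean document; each statement's English description precedes it below -/
import Mathlib

section
/- If ω : {0,…,p−2} → ℤ≥0 is antipalindromic with range {0,1,…,ζ}, then the distribution of φ_ω^(m) is palindromic: for every m ≥ 0 and every j with 0 ≤ j ≤ mζ, one has π_m^ω(j) = π_m^ω(mζ − j). -/
/-!
Let `R` reflect every digit, `x i ↦ p - 1 - x i`. On `Γ*` one has `S ∘ R ∘ S = R`, and
antipalindromicity gives `φ_ω (R (S x)) + φ_ω x = ζ`; pairing the terms of the two
Birkhoff sums in reverse order yields `φ_ω^(m) (R (S^m x)) = m ζ - φ_ω^(m) x`. So it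
suffices that `S` and `R` preserve `λ`. Realising `λ` as the law of the base-`p` digits of
a uniform point `u ∈ [0,1)`, `R` becomes `u ↦ 1 - u` (off the countable set of finite
expansions), and `S` becomes the map translating `[1 - p⁻ⁱ, 1 - p⁻ⁱ⁻¹)`, the set of `u`
whose expansion starts with exactly `i` digits `p - 1`, onto `[p⁻ⁱ⁻¹, p⁻ⁱ)`; both preserve
Lebesgue measure on `[0,1)`.
-/

open MeasureTheory
open scoped NNReal ENNReal

namespace Chacon

/-- The space of digit sequences with digits in `{0, …, p-1}`. -/
def Gamma (p : ℕ) : Set (ℕ → ℕ) := {x | ∀ i, x i < p}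

/-- `Γ*`: sequences with digits `< p` having infinitely many coordinates `≠ p - 1`. -/
def GammaStar (p : ℕ) : Set (ℕ → ℕ) :=
  {x | (∀ i, x i < p) ∧ {i | x i ≠ p - 1}.Infinite}

/-- The least index `i` with `x i ≠ p - 1`. -/
noncomputable def firstNot (p : ℕ) (x : ℕ → ℕ) : ℕ :=
  sInf {i | x i ≠ p - 1}

/-- `φ(x) = x_i` where `i` is the least index with `x_i ≠ p - 1`. -/
noncomputable def phi (p : ℕ) (x : ℕ → ℕ) : ℕ :=
  x (firstNot p x)

/-- The odometer `S` (addition of `1` with carry): the initial run of digits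
`p - 1` is replaced by zeros, and the first digit `≠ p - 1` is increased by one. -/
noncomputable def odo (p : ℕ) (x : ℕ → ℕ) : ℕ → ℕ :=
  fun i =>
    if i < firstNot p x then 0
    else if i = firstNot p x then x i + 1
    else x i

/-- `φ^(m)(x) = ∑_{j=0}^{m-1} φ(S^j x)`. -/
noncomputable def phiSum (p m : ℕ) (x : ℕ → ℕ) : ℕ :=
  ∑ j ∈ Finset.range m, phi p ((odo p)^[j] x)

/-- The base-`p` digit sequence of a real number `u`. -/
noncomputable def digitsOf (p : ℕ) (u : ℝ) : ℕ → ℕ :=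
  fun i => (⌊u * (p : ℝ) ^ (i + 1)⌋).toNat % p

/-- `λ`: the product probability measure on digit sequences under which the
coordinates are i.i.d., uniformly distributed in `{0, …, p-1}`; it is realized
concretely as the distribution of the base-`p` digit sequence of a uniformly
distributed random point of `[0,1)`. -/
noncomputable def lam (p : ℕ) : Measure (ℕ → ℕ) :=
  Measure.map (digitsOf p) (volume.restrict (Set.Ico (0 : ℝ) 1))

/-- `π_m(j) = λ({x : φ^(m)(x) = j})`. -/
noncomputable def pim (p m j : ℕ) : ℝ≥0∞ :=
  lam p {x | phiSum p m x = j}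

/-- `P_m^p(t) = ∑_{j ≥ 0} π_m(j) t^j`, a real polynomial
(the sum is over `0 ≤ j ≤ m (p-2)` since `0 ≤ φ^(m) ≤ m (p-2)` a.s.). -/
noncomputable def P (p m : ℕ) (t : ℝ) : ℝ :=
  ∑ j ∈ Finset.range (m * (p - 2) + 1), (pim p m j).toReal * t ^ j

/-- The `n`-th triangular number `Δ_n = n (n+1) / 2`. -/
def tri (n : ℕ) : ℕ := n * (n + 1) / 2

/-- The degree `D_m` of `P_m^p`: the largest `j` with `π_m(j) ≠ 0`. -/
noncomputable def D (p m : ℕ) : ℕ := sSup {j | pim p m j ≠ 0}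

/-- The lower degree `d_m` of `P_m^p`: the least `j` with `π_m(j) ≠ 0`. -/
noncomputable def d (p m : ℕ) : ℕ := sInf {j | pim p m j ≠ 0}

/-- `φ_ω(x) = ω(x_i)` where `i` is the least index with `x_i ≠ p - 1`. -/
noncomputable def phiOmega (p : ℕ) (ω : ℕ → ℕ) (x : ℕ → ℕ) : ℕ :=
  ω (x (firstNot p x))

/-- `φ_ω^(m)(x) = ∑_{j=0}^{m-1} φ_ω(S^j x)`. -/
noncomputable def phiOmegaSum (p : ℕ) (ω : ℕ → ℕ) (m : ℕ) (x : ℕ → ℕ) : ℕ :=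
  ∑ j ∈ Finset.range m, phiOmega p ω ((odo p)^[j] x)

/-- `π_m^ω(j) = λ({x : φ_ω^(m)(x) = j})`. -/
noncomputable def pimOmega (p : ℕ) (ω : ℕ → ℕ) (m j : ℕ) : ℝ≥0∞ :=
  lam p {x | phiOmegaSum p ω m x = j}

/-- `ω : {0, …, p-2} → ℤ≥0` is antipalindromic with range exactly `{0, 1, …, ζ}`
and `ω j = ζ - ω (p - 2 - j)` for all `0 ≤ j ≤ p - 2`. -/
def Antipalindromic (p ζ : ℕ) (ω : ℕ → ℕ) : Prop :=
  (∀ j, j ≤ p - 2 → ω j ≤ ζ) ∧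
  (∀ v, v ≤ ζ → ∃ j, j ≤ p - 2 ∧ ω j = v) ∧
  (∀ j, j ≤ p - 2 → ω j + ω (p - 2 - j) = ζ)

def reflect (p : ℕ) (x : ℕ → ℕ) : ℕ → ℕ := fun i => p - 1 - x i

section Odometer

variable {p : ℕ} {x : ℕ → ℕ}

lemma apply_of_lt_firstNot {j : ℕ} (h : j < firstNot p x) : x j = p - 1 := by
  simpa using Nat.notMem_of_lt_sInf (s := {i | x i ≠ p - 1}) h

lemma firstNot_eq_of {i : ℕ} (hi : x i ≠ p - 1) (hlt : ∀ j < i, x j = p - 1) :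
    firstNot p x = i :=
  le_antisymm (Nat.sInf_le hi) <| not_lt.1 fun h =>
    Nat.sInf_mem (s := {i | x i ≠ p - 1}) ⟨i, hi⟩ (hlt _ h)

lemma apply_firstNot_lt (hx : x ∈ GammaStar p) : x (firstNot p x) < p - 1 := by
  have hne : x (firstNot p x) ≠ p - 1 := Nat.sInf_mem hx.2.nonempty
  have := hx.1 (firstNot p x)
  omega

lemma odo_apply_of_lt {j : ℕ} (h : j < firstNot p x) : odo p x j = 0 := if_pos h

lemma odo_apply_firstNot : odo p x (firstNot p x) = x (firstNot p x) + 1 := by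
  simp [odo]

lemma odo_apply_of_gt {j : ℕ} (h : firstNot p x < j) : odo p x j = x j := by
  simp [odo, h.not_gt, h.ne']

lemma mapsTo_odo_gammaStar : Set.MapsTo (odo p) (GammaStar p) (GammaStar p) := fun x hx => by
  refine ⟨fun j => ?_, ?_⟩
  · rcases lt_trichotomy j (firstNot p x) with h | rfl | h
    · rw [odo_apply_of_lt h]; have := hx.1 j; omega
    · rw [odo_apply_firstNot]; have := apply_firstNot_lt hx; omega
    · rw [odo_apply_of_gt h]; exact hx.1 j
  · refine (hx.2.sdiff (Set.finite_Iic (firstNot p x))).mono fun j hj => ?_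
    obtain ⟨hj, hj'⟩ := hj
    simp only [Set.mem_Iic, not_le] at hj'
    simpa [odo_apply_of_gt hj'] using hj

lemma firstNot_reflect_odo (hx : x ∈ GammaStar p) :
    firstNot p (reflect p (odo p x)) = firstNot p x := by
  have := apply_firstNot_lt hx
  refine firstNot_eq_of ?_ fun j hj => ?_
  · simp only [reflect, odo_apply_firstNot]; omega
  · simp only [reflect, odo_apply_of_lt hj]; omega

lemma odo_reflect_odo (hx : x ∈ GammaStar p) : odo p (reflect p (odo p x)) = reflect p x := by
  have hfirst := firstNot_reflect_odo hx
  have hlt := apply_firstNot_lt hx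
  funext j
  rcases lt_trichotomy j (firstNot p x) with h | rfl | h
  · rw [odo_apply_of_lt (hfirst ▸ h)]
    simp only [reflect, apply_of_lt_firstNot h, Nat.sub_self]
  · conv_lhs => rw [← hfirst, odo_apply_firstNot, hfirst]
    simp only [reflect, odo_apply_firstNot]; omega
  · rw [odo_apply_of_gt (hfirst ▸ h)]
    simp only [reflect, odo_apply_of_gt h]

lemma iterate_odo_reflect_iterate_odo (hx : x ∈ GammaStar p) (k : ℕ) :
    (odo p)^[k] (reflect p ((odo p)^[k] x)) = reflect p x := by
  induction k with
  | zero => rfl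
  | succ k ih =>
    rw [Function.iterate_succ_apply' (odo p) k x, Function.iterate_succ_apply,
      odo_reflect_odo (mapsTo_odo_gammaStar.iterate k hx), ih]

variable {ω : ℕ → ℕ} {ζ : ℕ}

lemma phiOmega_reflect_odo_add (hω : ∀ j ≤ p - 2, ω j + ω (p - 2 - j) = ζ)
    (hx : x ∈ GammaStar p) : phiOmega p ω (reflect p (odo p x)) + phiOmega p ω x = ζ := by
  have hlt := apply_firstNot_lt hx
  have hdigit : reflect p (odo p x) (firstNot p x) = p - 2 - x (firstNot p x) := by
    simp only [reflect, odo_apply_firstNot]; omega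
  rw [phiOmega, firstNot_reflect_odo hx, hdigit, phiOmega, add_comm]
  exact hω _ (by omega)

/-- The `j`-th term of `φ_ω^(m) (R (S^m x))` pairs with the `(m - 1 - j)`-th term of
`φ_ω^(m) x`. -/
lemma phiOmegaSum_reflect_iterate_odo_add (hω : ∀ j ≤ p - 2, ω j + ω (p - 2 - j) = ζ)
    (hx : x ∈ GammaStar p) (m : ℕ) :
    phiOmegaSum p ω m (reflect p ((odo p)^[m] x)) + phiOmegaSum p ω m x = m * ζ := by
  have hpair : ∀ j ∈ Finset.range m,
      phiOmega p ω ((odo p)^[j] (reflect p ((odo p)^[m] x)))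
        + phiOmega p ω ((odo p)^[m - 1 - j] x) = ζ := by
    intro j hj
    have hjm : m = j + (m - 1 - j + 1) := by rw [Finset.mem_range] at hj; omega
    rw [hjm, Function.iterate_add_apply, iterate_odo_reflect_iterate_odo
      (mapsTo_odo_gammaStar.iterate _ hx), ← hjm, Function.iterate_succ_apply']
    exact phiOmega_reflect_odo_add hω (mapsTo_odo_gammaStar.iterate _ hx)
  rw [phiOmegaSum, phiOmegaSum,
    ← Finset.sum_range_reflect (fun j => phiOmega p ω ((odo p)^[j] x)) m,
    ← Finset.sum_add_distrib, Finset.sum_congr rfl hpair, Finset.sum_const, Finset.card_range,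
    smul_eq_mul]

end Odometer

section Measurability

variable {p : ℕ}

lemma measurable_firstNot : Measurable (firstNot p) := by
  refine measurable_to_countable' fun n => ?_
  have hpre : firstNot p ⁻¹' {n} = {x | x n ≠ p - 1 ∧ ∀ j < n, x j = p - 1} ∪
      {x | n = 0 ∧ ∀ j, x j = p - 1} := by
    ext x
    simp only [Set.mem_preimage, Set.mem_singleton_iff, Set.mem_union, Set.mem_ofPred_eq]
    by_cases hex : ∃ i, x i ≠ p - 1
    · have hne : x (firstNot p x) ≠ p - 1 := Nat.sInf_mem hex
      obtain ⟨i, hi⟩ := hex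
      refine ⟨?_, ?_⟩
      · rintro rfl; exact Or.inl ⟨hne, fun j => apply_of_lt_firstNot⟩
      · rintro (⟨hn, hlt⟩ | ⟨-, hall⟩)
        · exact firstNot_eq_of hn hlt
        · exact absurd (hall i) hi
    · push Not at hex
      have hzero : firstNot p x = 0 := by simp [firstNot, hex]
      rw [hzero]
      constructor
      · rintro rfl; exact Or.inr ⟨rfl, hex⟩
      · rintro (⟨hn, -⟩ | ⟨rfl, -⟩)
        · exact absurd (hex n) hn
        · rfl
  rw [hpre]
  exact .union (by measurability) (by measurability)

lemma measurable_comp_firstNot {β : Type*} [MeasurableSpace β] {f : ℕ → (ℕ → ℕ) → β}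
    (hf : ∀ n, Measurable (f n)) : Measurable fun x => f (firstNot p x) x :=
  (measurable_from_prod_countable_left (f := fun q : (ℕ → ℕ) × ℕ => f q.2 q.1) hf).comp
    (measurable_id.prodMk measurable_firstNot)

lemma measurable_odo : Measurable (odo p) :=
  measurable_comp_firstNot (f := fun n x i => if i < n then 0 else if i = n then x i + 1 else x i)
    fun n => measurable_pi_lambda _ fun i => by measurability

lemma measurable_reflect : Measurable (reflect p) :=
  measurable_pi_lambda _ fun i =>
    (measurable_of_countable (p - 1 - ·)).comp (measurable_pi_apply i)

lemma measurable_phiOmegaSum (ω : ℕ → ℕ) (m : ℕ) : Measurable (phiOmegaSum p ω m) := by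
  have hphi : Measurable (phiOmega p ω) :=
    measurable_comp_firstNot fun n => (measurable_of_countable ω).comp (measurable_pi_apply n)
  exact Finset.measurable_sum _ fun j _ => hphi.comp (measurable_odo.iterate j)

lemma measurable_digitsOf : Measurable (digitsOf p) :=
  measurable_pi_lambda _ fun _ => (measurable_of_countable fun z : ℤ => z.toNat % p).comp
    (Int.measurable_floor.comp (measurable_id.mul_const _))

lemma measurableSet_gammaStar : MeasurableSet (GammaStar p) := by
  have hset : GammaStar p = {x | (∀ i, x i < p) ∧ ∀ n, ∃ i, n ≤ i ∧ x i ≠ p - 1} := by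
    ext x
    simp only [GammaStar, Set.mem_ofPred_eq, ← Nat.frequently_atTop_iff_infinite,
      Filter.frequently_atTop]
  rw [hset]
  measurability

end Measurability

section Digits

open Int (fract)

variable {p : ℕ} {u : ℝ}

lemma digitsOf_lt (hp : 0 < p) (u : ℝ) (k : ℕ) : digitsOf p u k < p := Nat.mod_lt _ hp

lemma digitsOf_add_fract (hp : 0 < p) (hu : 0 ≤ u) (k : ℕ) :
    (digitsOf p u k : ℝ) + fract (u * p ^ (k + 1)) = p * fract (u * p ^ k) := by
  set a := u * (p : ℝ) ^ k
  have hpa : u * (p : ℝ) ^ (k + 1) = p * a := by ring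
  set m := ⌊(p : ℝ) * a⌋ - p * ⌊a⌋ with hm
  have hreal : (m : ℝ) + fract ((p : ℝ) * a) = p * fract a := by
    simp only [hm, Int.fract, Int.cast_sub, Int.cast_mul, Int.cast_natCast]; ring
  have hm0 : 0 ≤ m := by
    have : (-1 : ℝ) < m := by
      nlinarith [Int.fract_nonneg a, Int.fract_lt_one ((p : ℝ) * a)]
    have : (-1 : ℤ) < m := by exact_mod_cast this
    omega
  have hmp : m < p := by
    have : (m : ℝ) < p := by
      nlinarith [Int.fract_lt_one a, Int.fract_nonneg ((p : ℝ) * a),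
        (Nat.cast_pos.2 hp : (0 : ℝ) < p)]
    exact_mod_cast this
  have hdig : (digitsOf p u k : ℤ) = m := by
    have hfloor : ⌊(p : ℝ) * a⌋ = m + p * ⌊a⌋ := by omega
    have hnn : 0 ≤ ⌊(p : ℝ) * a⌋ := Int.floor_nonneg.2 (by positivity)
    rw [digitsOf, hpa, Int.natCast_mod, Int.toNat_of_nonneg hnn, hfloor,
      Int.add_mul_emod_self_left, Int.emod_eq_of_lt hm0 hmp]
  rw [hpa, ← hreal, ← hdig, Int.cast_natCast]

lemma one_sub_fract_mul_pow_add (hp : 0 < p) (hu : 0 ≤ u) {n t : ℕ}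
    (h : ∀ k < t, digitsOf p u (n + k) = p - 1) :
    1 - fract (u * p ^ (n + t)) = p ^ t * (1 - fract (u * p ^ n)) := by
  induction t with
  | zero => simp
  | succ t ih =>
    have hdig := digitsOf_add_fract hp hu (n + t)
    rw [h t t.lt_succ_self, Nat.cast_sub (by omega), Nat.cast_one] at hdig
    have ih' := ih fun k hk => h k (by omega)
    rw [← add_assoc, pow_succ (p : ℝ) t]
    linear_combination -hdig + (p : ℝ) * ih'

lemma digitsOf_eq_pred_of_le (hp : 0 < p) (hu : 0 ≤ u) {k : ℕ}
    (h : 1 - (p : ℝ)⁻¹ ≤ fract (u * p ^ k)) : digitsOf p u k = p - 1 := by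
  have hdig := digitsOf_add_fract hp hu k
  have hpk : (p : ℝ) - 1 ≤ p * fract (u * p ^ k) := by
    have : (p : ℝ) * (1 - (p : ℝ)⁻¹) = p - 1 := by field_simp
    nlinarith [(Nat.cast_pos.2 hp : (0 : ℝ) < p)]
  have : (p : ℝ) < digitsOf p u k + 2 := by linarith [Int.fract_lt_one (u * (p : ℝ) ^ (k + 1))]
  have : p < digitsOf p u k + 2 := by exact_mod_cast this
  have := digitsOf_lt hp u k
  omega

lemma one_sub_fract_mul_pow_of_forall (hp : 0 < p) (hu : u ∈ Set.Ico 0 1) {i : ℕ}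
    (h : ∀ k < i, digitsOf p u k = p - 1) : 1 - fract (u * p ^ i) = p ^ i * (1 - u) := by
  simpa [Int.fract_eq_self.2 hu] using
    one_sub_fract_mul_pow_add (n := 0) hp hu.1 (by simpa using h)

lemma forall_digitsOf_eq_pred_iff (hp : 0 < p) (hu : u ∈ Set.Ico 0 1) (i : ℕ) :
    (∀ k < i, digitsOf p u k = p - 1) ↔ 1 - ((p : ℝ) ^ i)⁻¹ ≤ u := by
  refine ⟨fun h => ?_, fun h => ?_⟩
  · have := one_sub_fract_mul_pow_of_forall hp hu h
    rw [sub_le_comm, ← one_div, le_div_iff₀' (by positivity)]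
    linarith [Int.fract_nonneg (u * (p : ℝ) ^ i)]
  · induction i with
    | zero => simp
    | succ i ih =>
      have hle : ((p : ℝ) ^ (i + 1))⁻¹ ≤ ((p : ℝ) ^ i)⁻¹ :=
        inv_anti₀ (by positivity) (pow_le_pow_right₀ (by exact_mod_cast hp) i.le_succ)
      have hprefix := ih (by linarith)
      intro k hk
      rcases Nat.lt_succ_iff_lt_or_eq.1 hk with hk | rfl
      · exact hprefix k hk
      · refine digitsOf_eq_pred_of_le hp hu.1 ?_
        have := one_sub_fract_mul_pow_of_forall hp hu hprefix
        have : (p : ℝ) ^ k * (1 - u) ≤ (p : ℝ)⁻¹ := by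
          calc (p : ℝ) ^ k * (1 - u) ≤ p ^ k * ((p : ℝ) ^ (k + 1))⁻¹ := by gcongr; linarith
            _ = (p : ℝ)⁻¹ := by field_simp; ring
        linarith

lemma digitsOf_mem_gammaStar (hp : 1 < p) (hu : 0 ≤ u) : digitsOf p u ∈ GammaStar p := by
  refine ⟨digitsOf_lt (by omega) u, Set.infinite_of_forall_exists_gt fun n => ?_⟩
  by_contra! hall
  -- each digit `p - 1` multiplies `1 - frac(u pᵏ)` by `p`, which cannot go on forever
  set e := 1 - fract (u * (p : ℝ) ^ (n + 1))
  have htail (t : ℕ) : 1 - fract (u * p ^ (n + 1 + t)) = p ^ t * e :=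
    one_sub_fract_mul_pow_add (by omega) hu fun k _ => by
      by_contra hk; exact (hall _ hk).not_gt (by omega)
  have hpos : 0 < e := by linarith [Int.fract_lt_one (u * (p : ℝ) ^ (n + 1))]
  obtain ⟨t, ht⟩ := pow_unbounded_of_one_lt e⁻¹ (by exact_mod_cast hp : (1 : ℝ) < p)
  rw [inv_lt_iff_one_lt_mul₀ hpos] at ht
  linarith [htail t, Int.fract_nonneg (u * (p : ℝ) ^ (n + 1 + t))]

end Digits

section RealOdometer

open Int (fract)

variable {p : ℕ} {u : ℝ} {i : ℕ}

/-- `carryInterval p i` is the set of `u ∈ [0,1)` whose expansion starts with exactly `i` digits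
`p - 1` (`firstNot_digitsOf_eq_iff`); the odometer translates it by `odoShift p i` onto
`carryImage p i`. -/
def carryInterval (p i : ℕ) : Set ℝ :=
  Set.Ico (1 - ((p : ℝ) ^ i)⁻¹) (1 - ((p : ℝ) ^ (i + 1))⁻¹)

def carryImage (p i : ℕ) : Set ℝ := Set.Ico (((p : ℝ) ^ (i + 1))⁻¹) (((p : ℝ) ^ i)⁻¹)

noncomputable def odoShift (p i : ℕ) : ℝ := ((p : ℝ) ^ i)⁻¹ + ((p : ℝ) ^ (i + 1))⁻¹ - 1

noncomputable def odoReal (p : ℕ) (u : ℝ) : ℝ := u + odoShift p (firstNot p (digitsOf p u))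

lemma firstNot_digitsOf_eq_iff (hp : 1 < p) (hu : u ∈ Set.Ico 0 1) :
    firstNot p (digitsOf p u) = i ↔ u ∈ carryInterval p i := by
  rw [carryInterval, Set.mem_Ico, ← forall_digitsOf_eq_pred_iff (by omega) hu, ← not_le,
    ← forall_digitsOf_eq_pred_iff (by omega) hu]
  constructor
  · rintro rfl
    exact ⟨fun k => apply_of_lt_firstNot, fun h =>
      (apply_firstNot_lt (digitsOf_mem_gammaStar hp hu.1)).ne (h _ (Nat.lt_succ_self _))⟩
  · rintro ⟨hlt, hi⟩
    refine firstNot_eq_of (fun heq => hi fun k hk => ?_) hlt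
    rcases Nat.lt_succ_iff_lt_or_eq.1 hk with hk | rfl
    exacts [hlt k hk, heq]

lemma preimage_add_odoShift_carryImage :
    (· + odoShift p i) ⁻¹' carryImage p i = carryInterval p i := by
  rw [carryImage, Set.preimage_add_const_Ico, carryInterval, odoShift]
  congr 1 <;> ring

lemma carryInterval_subset_Ico (hp : 0 < p) : carryInterval p i ⊆ Set.Ico 0 1 := by
  have : ((p : ℝ) ^ i)⁻¹ ≤ 1 := inv_le_one_of_one_le₀ (one_le_pow₀ (by exact_mod_cast hp))
  have : 0 < ((p : ℝ) ^ (i + 1))⁻¹ := by positivity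
  exact fun u ⟨h1, h2⟩ => ⟨by linarith, by linarith⟩

lemma iUnion_carryInterval (hp : 1 < p) : ⋃ i, carryInterval p i = Set.Ico 0 1 :=
  (Set.iUnion_subset fun _ => carryInterval_subset_Ico (by omega)).antisymm fun u hu =>
    Set.mem_iUnion.2 ⟨_, (firstNot_digitsOf_eq_iff hp hu).1 rfl⟩

lemma iUnion_carryImage (hp : 1 < p) : ⋃ i, carryImage p i = Set.Ioo 0 1 := by
  have hp1 : (1 : ℝ) < p := by exact_mod_cast hp
  refine Set.Subset.antisymm (Set.iUnion_subset fun i v hv => ?_) fun v hv => ?_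
  · exact ⟨lt_of_lt_of_le (by positivity) hv.1,
      hv.2.trans_le (inv_le_one_of_one_le₀ (one_le_pow₀ hp1.le))⟩
  obtain ⟨hv0, hv1⟩ := hv
  classical
  have hex : ∃ n, ((p : ℝ) ^ n)⁻¹ ≤ v := by
    obtain ⟨n, hn⟩ := exists_pow_lt_of_lt_one hv0 (inv_lt_one_of_one_lt₀ hp1)
    exact ⟨n, by rw [← inv_pow]; exact hn.le⟩
  have hn0 : Nat.find hex ≠ 0 := fun h => by
    have := Nat.find_spec hex
    rw [h, pow_zero, inv_one] at this
    linarith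
  refine Set.mem_iUnion.2 ⟨Nat.find hex - 1, ?_, ?_⟩
  · rw [Nat.sub_add_cancel (Nat.pos_of_ne_zero hn0)]
    exact Nat.find_spec hex
  · exact not_le.1 (Nat.find_min hex (by omega))

lemma antitone_inv_pow (hp : 0 < p) : Antitone fun n : ℕ => ((p : ℝ) ^ n)⁻¹ := fun _ _ hmn =>
  inv_anti₀ (by positivity) (pow_le_pow_right₀ (by exact_mod_cast hp) hmn)

lemma pairwise_disjoint_carryInterval (hp : 0 < p) :
    Pairwise (Function.onFun Disjoint (carryInterval p)) := fun _ _ h => by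
  simpa only [carryInterval, Function.onFun, Order.succ_eq_add_one] using
    (show Monotone fun n : ℕ => 1 - ((p : ℝ) ^ n)⁻¹ from fun _ _ hmn =>
      sub_le_sub_left (antitone_inv_pow hp hmn) 1).pairwise_disjoint_on_Ico_succ h

lemma pairwise_disjoint_carryImage (hp : 0 < p) :
    Pairwise (Function.onFun Disjoint (carryImage p)) := fun _ _ h => by
  simpa only [carryImage, Function.onFun, Order.succ_eq_add_one] using
    (antitone_inv_pow hp).pairwise_disjoint_on_Ico_succ h

lemma odoReal_mem_carryImage (hp : 1 < p) (hu : u ∈ Set.Ico 0 1) :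
    odoReal p u ∈ carryImage p (firstNot p (digitsOf p u)) := by
  rw [odoReal, ← Set.mem_preimage (f := (· + odoShift p _)), preimage_add_odoShift_carryImage]
  exact (firstNot_digitsOf_eq_iff hp hu).1 rfl

lemma fract_mul_pow_of_mem_carryImage (hp : 0 < p) {v : ℝ} (hv : v ∈ carryImage p i) {k : ℕ}
    (hk : k ≤ i) : fract (v * p ^ k) = v * p ^ k := by
  refine Int.fract_eq_self.2 ⟨mul_nonneg (le_trans (by positivity) hv.1) (by positivity), ?_⟩
  calc v * p ^ k < ((p : ℝ) ^ i)⁻¹ * p ^ k := by gcongr; exact hv.2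
    _ ≤ ((p : ℝ) ^ k)⁻¹ * p ^ k := by gcongr; exact_mod_cast hp
    _ = 1 := inv_mul_cancel₀ (by positivity)

lemma fract_add_odoShift_mul_pow (hp : 0 < p) (u : ℝ) (t : ℕ) :
    fract ((u + odoShift p i) * p ^ (i + 1 + t)) = fract (u * p ^ (i + 1 + t)) := by
  have : (u + odoShift p i) * p ^ (i + 1 + t) =
      u * p ^ (i + 1 + t) + ((p ^ (t + 1) + p ^ t - p ^ (i + 1 + t) : ℤ) : ℝ) := by
    have : (p : ℝ) ≠ 0 := by positivity
    rw [odoShift]; push_cast; field_simp; ring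
  rw [this, Int.fract_add_intCast]

lemma digitsOf_odoReal (hp : 1 < p) (hu : u ∈ Set.Ico 0 1) :
    digitsOf p (odoReal p u) = odo p (digitsOf p u) := by
  have hp0 : (0 : ℝ) < p := by positivity
  set i := firstNot p (digitsOf p u)
  set v := odoReal p u
  have hB : v ∈ carryImage p i := odoReal_mem_carryImage hp hu
  have hdv := digitsOf_add_fract (p := p) (by omega) (le_trans (by positivity) hB.1)
  have hdu := digitsOf_add_fract (p := p) (by omega) hu.1
  have hlow (k : ℕ) (hk : k ≤ i) := fract_mul_pow_of_mem_carryImage (by omega) hB hk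
  have hhigh (t : ℕ) : fract (v * p ^ (i + 1 + t)) = fract (u * p ^ (i + 1 + t)) :=
    fract_add_odoShift_mul_pow (by omega) u t
  funext k
  rcases lt_trichotomy k i with hk | rfl | hk
  · rw [odo_apply_of_lt hk]
    have h := hdv k
    rw [hlow k hk.le, hlow (k + 1) hk, pow_succ] at h
    exact_mod_cast (show (digitsOf p v k : ℝ) = 0 by linarith)
  · rw [odo_apply_firstNot]
    have h := hdv i
    rw [hlow i le_rfl, ← add_zero (i + 1), hhigh 0, add_zero] at h
    have hfi := one_sub_fract_mul_pow_of_forall (by omega) hu fun k hk =>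
      apply_of_lt_firstNot (x := digitsOf p u) hk
    have hvi : v * p ^ i = u * p ^ i + (1 + (p : ℝ)⁻¹ - p ^ i) := by
      change (u + odoShift p i) * _ = _
      rw [odoShift]; field_simp; ring
    have : (p : ℝ) * (p : ℝ)⁻¹ = 1 := mul_inv_cancel₀ hp0.ne'
    exact_mod_cast (show (digitsOf p v i : ℝ) = digitsOf p u i + 1 by
      linear_combination h - hdu i + p * hvi + p * hfi + this)
  · obtain ⟨t, rfl⟩ : ∃ t, k = i + 1 + t := ⟨k - (i + 1), by omega⟩
    rw [odo_apply_of_gt hk]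
    have h := hdv (i + 1 + t)
    have h' := hdu (i + 1 + t)
    rw [show i + 1 + t + 1 = i + 1 + (t + 1) by ring] at h h'
    rw [hhigh t, hhigh (t + 1)] at h
    exact_mod_cast (show (digitsOf p v _ : ℝ) = digitsOf p u _ by linarith)

lemma measurable_odoReal : Measurable (odoReal p) :=
  measurable_id.add ((measurable_of_countable (odoShift p)).comp
    (measurable_firstNot.comp measurable_digitsOf))

theorem measurePreserving_odoReal (hp : 1 < p) :
    MeasurePreserving (odoReal p) (volume.restrict (Set.Ico 0 1))
      (volume.restrict (Set.Ico 0 1)) := by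
  refine ⟨measurable_odoReal, ?_⟩
  have htranslate (i : ℕ) : (volume.restrict (carryInterval p i)).map (odoReal p) =
      volume.restrict (carryImage p i) := by
    rw [Measure.map_congr (g := (· + odoShift p i)) ?_, ← preimage_add_odoShift_carryImage]
    · exact ((measurePreserving_add_right volume _).restrict_preimage measurableSet_Ico).map_eq
    · refine ae_restrict_of_forall_mem measurableSet_Ico fun u hu => ?_
      rw [odoReal, (firstNot_digitsOf_eq_iff hp (carryInterval_subset_Ico (by omega) hu)).2 hu]
  calc (volume.restrict (Set.Ico 0 1)).map (odoReal p)
      = (Measure.sum fun i => volume.restrict (carryInterval p i)).map (odoReal p) := by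
        rw [← Measure.restrict_iUnion (pairwise_disjoint_carryInterval (by omega))
          fun _ => measurableSet_Ico, iUnion_carryInterval hp]
    _ = Measure.sum fun i => volume.restrict (carryImage p i) := by
        rw [Measure.map_sum measurable_odoReal.aemeasurable]
        simp only [htranslate]
    _ = volume.restrict (Set.Ico 0 1) := by
        rw [← Measure.restrict_iUnion (pairwise_disjoint_carryImage (by omega))
          fun _ => measurableSet_Ico, iUnion_carryImage hp]
        exact Measure.restrict_congr_set Ioo_ae_eq_Ico

end RealOdometer

section Invariance

open Int (fract)

variable {p : ℕ}

def finiteExpansions (p : ℕ) : Set ℝ := {u | ∃ k : ℕ, ∃ z : ℤ, u * p ^ k = z}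

lemma countable_finiteExpansions (hp : 0 < p) : (finiteExpansions p).Countable :=
  (Set.countable_range fun q : ℕ × ℤ => (q.2 : ℝ) / p ^ q.1).mono fun _ ⟨k, z, h⟩ =>
    Set.mem_range.2 ⟨(k, z), (div_eq_iff (by positivity)).2 h.symm⟩

lemma digitsOf_one_sub (hp : 0 < p) {v : ℝ} (hv : v ∈ Set.Icc 0 1)
    (hv' : v ∉ finiteExpansions p) : digitsOf p (1 - v) = reflect p (digitsOf p v) := by
  have hfract (k : ℕ) : fract ((1 - v) * p ^ k) = 1 - fract (v * p ^ k) := by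
    have hne : fract (v * p ^ k) ≠ 0 := fun h =>
      hv' ⟨k, ⌊v * p ^ k⌋, by linarith [Int.floor_add_fract (v * (p : ℝ) ^ k)]⟩
    rw [show (1 - v) * p ^ k = ((p ^ k : ℕ) : ℝ) + -(v * p ^ k) by push_cast; ring,
      Int.fract_natCast_add, Int.fract_neg hne]
  funext k
  have h1 := digitsOf_add_fract hp (by linarith [hv.2] : 0 ≤ 1 - v) k
  have h2 := digitsOf_add_fract hp hv.1 k
  rw [hfract, hfract] at h1
  have hlt := digitsOf_lt hp v k
  rw [reflect, ← Nat.cast_inj (R := ℝ), Nat.sub_sub, Nat.cast_sub (by omega)]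
  push_cast
  linarith

theorem measurePreserving_one_sub :
    MeasurePreserving (fun v : ℝ => 1 - v) (volume.restrict (Set.Ico 0 1))
      (volume.restrict (Set.Ico 0 1)) := by
  have h := (volume.measurePreserving_sub_left (1 : ℝ)).restrict_preimage
    (measurableSet_Ico (a := (0 : ℝ)) (b := 1))
  rwa [Set.preimage_const_sub_Ico, sub_zero, sub_self,
    Measure.restrict_congr_set (Ioo_ae_eq_Ioc.symm.trans Ioo_ae_eq_Ico)] at h

theorem measurePreserving_odo (hp : 1 < p) : MeasurePreserving (odo p) (lam p) (lam p) := by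
  refine ⟨measurable_odo, ?_⟩
  have hconj : odo p ∘ digitsOf p =ᵐ[volume.restrict (Set.Ico 0 1)] digitsOf p ∘ odoReal p :=
    ae_restrict_of_forall_mem measurableSet_Ico fun u hu => (digitsOf_odoReal hp hu).symm
  conv_rhs => rw [lam, ← (measurePreserving_odoReal hp).map_eq]
  rw [lam, Measure.map_map measurable_odo measurable_digitsOf, Measure.map_congr hconj,
    Measure.map_map measurable_digitsOf measurable_odoReal]

theorem measurePreserving_reflect (hp : 0 < p) :
    MeasurePreserving (reflect p) (lam p) (lam p) := by
  refine ⟨measurable_reflect, ?_⟩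
  have hconj : reflect p ∘ digitsOf p =ᵐ[volume.restrict (Set.Ico 0 1)]
      digitsOf p ∘ fun v => 1 - v := by
    filter_upwards [ae_restrict_mem measurableSet_Ico,
      ae_restrict_of_ae ((countable_finiteExpansions hp).measure_zero volume |>
        measure_eq_zero_iff_ae_notMem.1)] with v hv hv'
    exact (digitsOf_one_sub hp (Set.Ico_subset_Icc_self hv) hv').symm
  conv_rhs => rw [lam, ← measurePreserving_one_sub.map_eq]
  rw [lam, Measure.map_map measurable_reflect measurable_digitsOf, Measure.map_congr hconj,
    Measure.map_map measurable_digitsOf measurePreserving_one_sub.measurable]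

lemma ae_mem_gammaStar (hp : 1 < p) : ∀ᵐ x ∂lam p, x ∈ GammaStar p :=
  (ae_map_iff measurable_digitsOf.aemeasurable measurableSet_gammaStar).2 <|
    ae_restrict_of_forall_mem measurableSet_Ico fun _ hu => digitsOf_mem_gammaStar hp hu.1

end Invariance

/-- if `ω` is antipalindromic with range `{0, …, ζ}`, then the
distribution of `φ_ω^(m)` is palindromic: `π_m^ω(j) = π_m^ω(mζ - j)` for
all `m ≥ 0` and all `0 ≤ j ≤ mζ`. -/
theorem statement_2 (p : ℕ) (hp : 3 ≤ p) (ζ : ℕ) (ω : ℕ → ℕ)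
    (hω : Antipalindromic p ζ ω) (m j : ℕ) (hj : j ≤ m * ζ) :
    pimOmega p ω m j = pimOmega p ω m (m * ζ - j) := by
  set Ψ := reflect p ∘ (odo p)^[m]
  have hΨ : MeasurePreserving Ψ (lam p) (lam p) :=
    (measurePreserving_reflect (by omega)).comp ((measurePreserving_odo (by omega)).iterate m)
  have hsum : ∀ᵐ x ∂lam p, phiOmegaSum p ω m (Ψ x) + phiOmegaSum p ω m x = m * ζ :=
    (ae_mem_gammaStar (by omega)).mono fun x hx =>
      phiOmegaSum_reflect_iterate_odo_add hω.2.2 hx m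
  have hmeas : MeasurableSet {x | phiOmegaSum p ω m x = j} :=
    measurableSet_eq_fun (measurable_phiOmegaSum ω m) measurable_const
  calc pimOmega p ω m j = lam p (Ψ ⁻¹' {x | phiOmegaSum p ω m x = j}) :=
        (hΨ.measure_preimage hmeas.nullMeasurableSet).symm
    _ = pimOmega p ω m (m * ζ - j) :=
        measure_congr <| Filter.eventuallyEq_set.2 <| hsum.mono fun x hx => by
          simp only [Set.mem_preimage, Set.mem_ofPred_eq]; omega

end Chacon
end

section
/- Let 0 < k < p, m ≥ 0, and x ∈ Γ*. Then: (i) if x_0 < p−k, φ^(pm+k)(x) = k·x_0 + Δ_{k−1} + m·Δ_{p−2} + φ^(m)(σx); (ii) if x_0 ≥ p−k, φ^(pm+k)(x) = (p−1−x_0)·x_0 + Δ_{p−2−x_0} + Δ_{x_0+k−p−1} + m·Δ_{p−2} + φ^(m+1)(σx). Here σ : Γ* → Γ* is the shift σ(x_0,x_1,…) = (x_1,x_2,…), and (p−1−x_0)·x_0 + Δ_{p−2−x_0} = ω^{(p−1−x_0)}(x_0) is the sum x_0 + (x_0+1) + ⋯ + (p−2). -/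
open MeasureTheory
open scoped NNReal ENNReal

namespace Chacon

/-- The shift `σ(x_0, x_1, x_2, …) = (x_1, x_2, …)`. -/
def shift (x : ℕ → ℕ) : ℕ → ℕ := fun i => x (i + 1)

/-! ### Auxiliary lemmas -/

/-- Prepend a digit to a sequence. -/
def cons' (b : ℕ) (w : ℕ → ℕ) : ℕ → ℕ := fun i => if i = 0 then b else w (i - 1)

@[simp] lemma cons'_zero (b : ℕ) (w : ℕ → ℕ) : cons' b w 0 = b := rfl

@[simp] lemma cons'_succ (b : ℕ) (w : ℕ → ℕ) (j : ℕ) : cons' b w (j + 1) = w j := rfl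

lemma cons'_shift (x : ℕ → ℕ) : cons' (x 0) (shift x) = x := by
  funext i
  cases i with
  | zero => rfl
  | succ j => rfl

lemma two_tri (n : ℕ) : tri n * 2 = n * (n + 1) := by
  have h : 2 ∣ n * (n + 1) := (Nat.even_mul_succ_self n).two_dvd
  exact Nat.div_mul_cancel h

lemma tri_add (a b : ℕ) : tri (a + b) = tri a + tri b + a * b := by
  apply Nat.eq_of_mul_eq_mul_right (show 0 < 2 by norm_num)
  have h1 := two_tri (a + b)
  have h2 := two_tri a
  have h3 := two_tri b
  have h4 : (tri a + tri b + a * b) * 2 = tri a * 2 + tri b * 2 + a * b * 2 := by ring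
  rw [h1, h4, h2, h3]; ring

lemma shift_mem {p : ℕ} {x : ℕ → ℕ} (hx : x ∈ GammaStar p) : shift x ∈ GammaStar p := by
  obtain ⟨h1, h2⟩ := hx
  refine ⟨fun i => h1 (i + 1), ?_⟩
  intro hfin
  have hsub : {i | x i ≠ p - 1} ⊆ insert 0 ((· + 1) '' {i | shift x i ≠ p - 1}) := by
    intro i hi
    cases i with
    | zero => exact Set.mem_insert _ _
    | succ j => exact Set.mem_insert_of_mem _ ⟨j, hi, rfl⟩
  exact h2 (Set.Finite.subset ((hfin.image _).insert 0) hsub)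

lemma cons'_mem {p b : ℕ} {w : ℕ → ℕ} (hb : b < p) (hw : w ∈ GammaStar p) :
    cons' b w ∈ GammaStar p := by
  obtain ⟨h1, h2⟩ := hw
  refine ⟨fun i => ?_, ?_⟩
  · cases i with
    | zero => exact hb
    | succ j => exact h1 j
  · have hsub : (· + 1) '' {i | w i ≠ p - 1} ⊆ {i | cons' b w i ≠ p - 1} := by
      rintro _ ⟨j, hj, rfl⟩
      exact hj
    exact (h2.image (fun i _ j _ h => by omega)).mono hsub

lemma firstNot_eq {p n : ℕ} {x : ℕ → ℕ} (h : x n ≠ p - 1)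
    (hl : ∀ m < n, x m = p - 1) : firstNot p x = n := by
  refine le_antisymm (Nat.sInf_le h) ?_
  by_contra hlt
  push_neg at hlt
  exact Nat.sInf_mem (⟨n, h⟩ : Set.Nonempty {i | x i ≠ p - 1}) (hl _ hlt)

lemma phi_cons'_lt {p b : ℕ} (w : ℕ → ℕ) (hb : b ≠ p - 1) : phi p (cons' b w) = b := by
  have h0 : firstNot p (cons' b w) = 0 :=
    firstNot_eq (show cons' b w 0 ≠ p - 1 from hb) (fun m hm => absurd hm (Nat.not_lt_zero m))
  unfold phi
  rw [h0, cons'_zero]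

lemma odo_cons'_lt {p b : ℕ} (w : ℕ → ℕ) (hb : b ≠ p - 1) :
    odo p (cons' b w) = cons' (b + 1) w := by
  have h0 : firstNot p (cons' b w) = 0 :=
    firstNot_eq (show cons' b w 0 ≠ p - 1 from hb) (fun m hm => absurd hm (Nat.not_lt_zero m))
  funext i
  unfold odo
  rw [h0]
  cases i with
  | zero => simp
  | succ j => simp

lemma firstNot_cons'_top {p : ℕ} {w : ℕ → ℕ} (hne : {i | w i ≠ p - 1}.Nonempty) :
    firstNot p (cons' (p - 1) w) = firstNot p w + 1 := by
  apply firstNot_eq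
  · exact (Nat.sInf_mem hne : w (firstNot p w) ≠ p - 1)
  · intro m hm
    cases m with
    | zero => rfl
    | succ j =>
      show w j = p - 1
      by_contra hj
      exact Nat.notMem_of_lt_sInf (show j < firstNot p w by omega) hj

lemma phi_cons'_top {p : ℕ} {w : ℕ → ℕ} (hne : {i | w i ≠ p - 1}.Nonempty) :
    phi p (cons' (p - 1) w) = phi p w := by
  unfold phi
  rw [firstNot_cons'_top hne, cons'_succ]

lemma odo_cons'_top {p : ℕ} {w : ℕ → ℕ} (hne : {i | w i ≠ p - 1}.Nonempty) :
    odo p (cons' (p - 1) w) = cons' 0 (odo p w) := by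
  have hf := firstNot_cons'_top (p := p) (w := w) hne
  funext i
  cases i with
  | zero =>
    show odo p (cons' (p - 1) w) 0 = 0
    unfold odo
    rw [hf]
    simp
  | succ j =>
    show odo p (cons' (p - 1) w) (j + 1) = odo p w j
    unfold odo
    rw [hf]
    rcases lt_trichotomy j (firstNot p w) with h | h | h
    · rw [if_pos (by omega), if_pos h]
    · subst h
      rw [if_neg (by omega), if_pos rfl, if_neg (by omega), if_pos rfl, cons'_succ]
    · rw [if_neg (by omega), if_neg (by omega), if_neg (by omega), if_neg (by omega),
        cons'_succ]

lemma odo_mem {p : ℕ} (hp : 2 ≤ p) {x : ℕ → ℕ} (hx : x ∈ GammaStar p) :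
    odo p x ∈ GammaStar p := by
  obtain ⟨h1, h2⟩ := hx
  have hne : {i | x i ≠ p - 1}.Nonempty := h2.nonempty
  have hfm : x (firstNot p x) ≠ p - 1 := Nat.sInf_mem hne
  constructor
  · intro i
    unfold odo
    split_ifs with h h'
    · omega
    · subst h'
      have := h1 (firstNot p x)
      omega
    · exact h1 i
  · have hsub : {i | x i ≠ p - 1} \ Set.Iic (firstNot p x) ⊆ {i | odo p x i ≠ p - 1} := by
      rintro i ⟨hi, hle⟩
      simp only [Set.mem_Iic, not_le] at hle
      show odo p x i ≠ p - 1
      unfold odo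
      rw [if_neg (by omega), if_neg (by omega)]
      exact hi
    exact (h2.diff (Set.finite_Iic _)).mono hsub

lemma phiSum_succ (p m : ℕ) (x : ℕ → ℕ) :
    phiSum p (m + 1) x = phiSum p m x + phi p ((odo p)^[m] x) :=
  Finset.sum_range_succ _ _

lemma phiSum_succ' (p m : ℕ) (x : ℕ → ℕ) :
    phiSum p (m + 1) x = phi p x + phiSum p m (odo p x) := by
  unfold phiSum
  rw [Finset.sum_range_succ']
  simp only [Function.iterate_succ_apply, Function.iterate_zero_apply]
  exact add_comm _ _

lemma phiSum_add (p n m : ℕ) (x : ℕ → ℕ) :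
    phiSum p (n + m) x = phiSum p n x + phiSum p m ((odo p)^[n] x) := by
  induction m with
  | zero => simp [phiSum]
  | succ m ih =>
    have h1 : n + (m + 1) = (n + m) + 1 := by omega
    rw [h1, phiSum_succ, ih, phiSum_succ, Nat.add_assoc, ← Function.iterate_add_apply,
      Nat.add_comm m n]

lemma climb (p : ℕ) (w : ℕ → ℕ) (b : ℕ) :
    ∀ j, b + j ≤ p - 1 →
      (odo p)^[j] (cons' b w) = cons' (b + j) w ∧
      phiSum p j (cons' b w) = j * b + tri (j - 1) := by
  intro j
  induction j with
  | zero => intro _; simp [phiSum, tri]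
  | succ j ih =>
    intro h
    obtain ⟨h1, h2⟩ := ih (by omega)
    constructor
    · rw [Function.iterate_succ_apply', h1, odo_cons'_lt _ (by omega), Nat.add_assoc]
    · rw [phiSum_succ, h1, h2, phi_cons'_lt _ (by omega)]
      have htri : tri j = tri (j - 1) + j := by
        cases j with
        | zero => rfl
        | succ n =>
          have := tri_add n 1
          have h1 : tri 1 = 1 := rfl
          simp only [Nat.add_sub_cancel]
          omega
      have hb : (j + 1) * b = j * b + b := by ring
      have hs : (j + 1) - 1 = j := by omega
      rw [hs]
      omega

lemma block (p : ℕ) (hp : 3 ≤ p) {w : ℕ → ℕ} (hw : w ∈ GammaStar p) (b : ℕ) (hb : b ≤ p - 1) :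
    (odo p)^[p] (cons' b w) = cons' b (odo p w) ∧
    phiSum p p (cons' b w) = tri (p - 2) + phi p w := by
  have hne : {i | w i ≠ p - 1}.Nonempty := hw.2.nonempty
  obtain ⟨hc1, hc2⟩ := climb p w b (p - 1 - b) (by omega)
  rw [show b + (p - 1 - b) = p - 1 from by omega] at hc1
  have hstep : odo p (cons' (p - 1) w) = cons' 0 (odo p w) := odo_cons'_top hne
  have hphi : phi p (cons' (p - 1) w) = phi p w := phi_cons'_top hne
  obtain ⟨hc3, hc4⟩ := climb p (odo p w) 0 b (by omega)
  rw [Nat.zero_add] at hc3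
  have harith : (p - 1 - b) * b + tri ((p - 1 - b) - 1) + tri (b - 1) = tri (p - 2) := by
    rcases Nat.eq_zero_or_pos b with hb0 | hb0
    · subst hb0
      simp only [Nat.mul_zero, Nat.sub_zero, Nat.zero_add]
      rw [show p - 1 - 1 = p - 2 from by omega]
      have : tri (0 - 1) = 0 := rfl
      omega
    · rcases Nat.eq_zero_or_pos (p - 1 - b) with hc0 | hc0
      · rw [hc0]
        rw [show b - 1 = p - 2 from by omega]
        have : tri (0 - 1) = 0 := rfl
        omega
      · obtain ⟨b', rfl⟩ : ∃ b', b = b' + 1 := ⟨b - 1, by omega⟩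
        obtain ⟨c', hc'⟩ : ∃ c', p - 1 - (b' + 1) = c' + 1 := ⟨p - 1 - (b' + 1) - 1, by omega⟩
        rw [hc']
        have e1 : tri (b' + (c' + 1)) = tri b' + tri (c' + 1) + b' * (c' + 1) := tri_add _ _
        have e2 : tri (c' + 1) = tri c' + tri 1 + c' * 1 := tri_add _ _
        have e3 : tri 1 = 1 := rfl
        rw [show p - 2 = b' + (c' + 1) from by omega, e1, e2]
        simp only [Nat.add_sub_cancel]
        have e4 : (c' + 1) * (b' + 1) = b' * (c' + 1) + c' + 1 := by ring
        omega
  constructor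
  · have e : (odo p)^[p] (cons' b w) = (odo p)^[b + (1 + (p - 1 - b))] (cons' b w) := by
      rw [show b + (1 + (p - 1 - b)) = p from by omega]
    rw [e, Function.iterate_add_apply, Function.iterate_add_apply, hc1,
      Function.iterate_one, hstep, hc3]
  · have e : phiSum p p (cons' b w) = phiSum p ((p - 1 - b) + (1 + b)) (cons' b w) := by
      rw [show (p - 1 - b) + (1 + b) = p from by omega]
    rw [e, phiSum_add, hc1, hc2, show (1 : ℕ) + b = b + 1 from by omega, phiSum_succ',
      hphi, hstep, hc4]
    omega

lemma iterate_mem {p : ℕ} (hp : 2 ≤ p) {w : ℕ → ℕ} (hw : w ∈ GammaStar p) (m : ℕ) :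
    (odo p)^[m] w ∈ GammaStar p := by
  induction m with
  | zero => exact hw
  | succ m ih =>
    rw [Function.iterate_succ_apply']
    exact odo_mem hp ih

lemma blocks (p : ℕ) (hp : 3 ≤ p) {w : ℕ → ℕ} (hw : w ∈ GammaStar p) (b : ℕ)
    (hb : b ≤ p - 1) (m : ℕ) :
    (odo p)^[p * m] (cons' b w) = cons' b ((odo p)^[m] w) ∧
    phiSum p (p * m) (cons' b w) = m * tri (p - 2) + phiSum p m w := by
  induction m with
  | zero => simp [phiSum]
  | succ m ih =>
    obtain ⟨ih1, ih2⟩ := ih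
    have hwm : (odo p)^[m] w ∈ GammaStar p := iterate_mem (by omega) hw m
    obtain ⟨hb1, hb2⟩ := block p hp hwm b hb
    constructor
    · rw [show p * (m + 1) = p + p * m from by ring, Function.iterate_add_apply, ih1, hb1,
        Function.iterate_succ_apply']
    · rw [show p * (m + 1) = p * m + p from by ring, phiSum_add, ih1, ih2, hb2, phiSum_succ]
      have h1 : (m + 1) * tri (p - 2) = m * tri (p - 2) + tri (p - 2) := by ring
      omega

/-- for `0 < k < p`, `m ≥ 0` and `x ∈ Γ*`:
(i) if `x_0 < p - k`, then
`φ^(pm+k)(x) = k x_0 + Δ_{k-1} + m Δ_{p-2} + φ^(m)(σ x)`;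
(ii) if `x_0 ≥ p - k`, then
`φ^(pm+k)(x) = (p-1-x_0) x_0 + Δ_{p-2-x_0} + Δ_{x_0+k-p-1} + m Δ_{p-2} + φ^(m+1)(σ x)`
(with the convention `Δ_{-1} = 0`, realized by truncated subtraction). -/
theorem statement_7 (p : ℕ) (hp : 3 ≤ p) (k : ℕ) (hk0 : 0 < k) (hkp : k < p)
    (m : ℕ) (x : ℕ → ℕ) (hx : x ∈ GammaStar p) :
    (x 0 < p - k →
      phiSum p (p * m + k) x =
        k * x 0 + tri (k - 1) + m * tri (p - 2) + phiSum p m (shift x)) ∧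
    (p - k ≤ x 0 →
      phiSum p (p * m + k) x =
        (p - 1 - x 0) * x 0 + tri (p - 2 - x 0) + tri (x 0 + k - p - 1)
          + m * tri (p - 2) + phiSum p (m + 1) (shift x)) := by
  have hx0 : x 0 < p := hx.1 0
  have hsx : shift x ∈ GammaStar p := shift_mem hx
  have hxc : cons' (x 0) (shift x) = x := cons'_shift x
  have hne : {i | shift x i ≠ p - 1}.Nonempty := hsx.2.nonempty
  constructor
  · intro hcase
    have h1 : phiSum p (p * m + k) x = phiSum p k x + phiSum p (p * m) ((odo p)^[k] x) := by
      rw [show p * m + k = k + p * m from by ring, phiSum_add]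
    obtain ⟨hc1, hc2⟩ := climb p (shift x) (x 0) k (by omega)
    rw [hxc] at hc1 hc2
    obtain ⟨_, hb2⟩ := blocks p hp hsx (x 0 + k) (by omega) m
    rw [h1, hc2, hc1, hb2]
    ring
  · intro hcase
    obtain ⟨hc1, hc2⟩ := climb p (shift x) (x 0) (p - 1 - x 0) (by omega)
    rw [hxc] at hc1 hc2
    rw [show x 0 + (p - 1 - x 0) = p - 1 from by omega] at hc1
    have h1 : phiSum p (p * m + k) x =
        phiSum p (p - 1 - x 0) x +
          phiSum p (1 + ((x 0 + k - p) + p * m)) ((odo p)^[p - 1 - x 0] x) := by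
      rw [← phiSum_add, show (p - 1 - x 0) + (1 + ((x 0 + k - p) + p * m)) = p * m + k
        from by omega]
    rw [h1, hc1, hc2,
      show (1 : ℕ) + ((x 0 + k - p) + p * m) = ((x 0 + k - p) + p * m) + 1 from by omega,
      phiSum_succ', phi_cons'_top hne, odo_cons'_top hne, phiSum_add]
    obtain ⟨hd1, hd2⟩ := climb p (odo p (shift x)) 0 (x 0 + k - p) (by omega)
    rw [Nat.zero_add] at hd1
    have hw' : odo p (shift x) ∈ GammaStar p := odo_mem (by omega) hsx
    obtain ⟨_, hb2⟩ := blocks p hp hw' (x 0 + k - p) (by omega) m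
    rw [hd1, hd2, hb2, phiSum_succ' p m (shift x)]
    rw [show (p - 1 - x 0) - 1 = p - 2 - x 0 from by omega]
    ring

end Chacon
end
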